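/- In the polylogarithmic Lie algebra L^PL the following bracket relations hold among the basis elements: [e1, e2] = 0; [e1, (ad e1)^n(e11)] = (ad e1)^{n+1}(e11); [e2, (ad e2)^n(e22)] = (ad e2)^{n+1}(e22); [e1, (ad e1)^n(e12)] = (ad e1)^{n+1}(e12); [e2, (ad e1)^n(e12)] = (ad e1)^{n+1}(e12); [e2, (ad e1)^n(e11)] = 0; [e1, (ad e2)^n(e22)] = 0; and for any two elements u, v taken from the list (ad e1)^m(e11), (ad e2)^m(e22), (ad e1)^m(e12) (m a natural number), [u, v] = 0. -/

import Mathlib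

inductive Gamma : Type
  | e1 | e11 | e2 | e22 | e12
deriving DecidableEq

noncomputable section

abbrev FL : Type := FreeLieAlgebra ℚ Gamma

/-- The five generators of the free Lie algebra. -/
def gen (x : Gamma) : FL := FreeLieAlgebra.of ℚ x

/-- The defining relations of the Lie algebra `L`. -/
def relSet : Set FL :=
  {⁅gen .e1, gen .e2⁆, ⁅gen .e11, gen .e2⁆, ⁅gen .e1, gen .e22⁆,
   ⁅gen .e11, gen .e22⁆ - ⁅gen .e2 - gen .e1, gen .e12⁆,
   (-⁅gen .e11, gen .e12⁆) - ⁅gen .e2 - gen .e1, gen .e12⁆,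
   ⁅gen .e22, gen .e12⁆ - ⁅gen .e2 - gen .e1, gen .e12⁆}

/-- The Lie ideal generated by the relations. -/
def relIdeal : LieIdeal ℚ FL := LieSubmodule.lieSpan ℚ FL relSet

/-- The Lie algebra `L`. -/
abbrev Lquot : Type := FL ⧸ relIdeal

/-- Projection `L(Γ) → L`. -/
def mkL : FL → Lquot := LieSubmodule.Quotient.mk (N := relIdeal)

/-- The Lie ideal `N` of `L` generated by `e11`, `e22`, `e12`. -/
def NIdeal : LieIdeal ℚ Lquot :=
  LieSubmodule.lieSpan ℚ Lquot {mkL (gen .e11), mkL (gen .e22), mkL (gen .e12)}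

/-- The Lie ideal `[N, N]`. -/
def NN : LieIdeal ℚ Lquot := ⁅NIdeal, NIdeal⁆

/-- The polylogarithmic Lie algebra `L^PL = L/[N,N]`. -/
abbrev LPL : Type := Lquot ⧸ NN

/-- Projection `L(Γ) → L^PL`. -/
def pl (x : FL) : LPL := LieSubmodule.Quotient.mk (N := NN) (mkL x)

def E1 : LPL := pl (gen .e1)
def E11 : LPL := pl (gen .e11)
def E2 : LPL := pl (gen .e2)
def E22 : LPL := pl (gen .e22)
def E12 : LPL := pl (gen .e12)

/-- The adjoint action `ad z : w ↦ ⁅z, w⁆` as a linear endomorphism of `L^PL`. -/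
def adPL (z : LPL) : Module.End ℚ LPL := LieAlgebra.ad ℚ LPL z

end
section auxproofs
attribute [local instance] LieRing.ofAssociativeRing

lemma pl_bracket (x y : FL) : pl ⁅x, y⁆ = ⁅pl x, pl y⁆ := rfl

lemma pl_rel_zero {x : FL} (h : x ∈ relSet) : pl x = 0 := by
  have h1 : mkL x = 0 :=
    LieSubmodule.Quotient.mk_eq_zero'.mpr (LieSubmodule.subset_lieSpan (R := ℚ) (L := FL) h)
  unfold pl
  rw [h1]
  simp

lemma pl_sub (x y : FL) : pl (x - y) = pl x - pl y := by
  show LieSubmodule.Quotient.mk' NN (LieSubmodule.Quotient.mk' relIdeal (x - y)) = _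
  rw [map_sub, map_sub]; rfl

lemma pl_neg (x : FL) : pl (-x) = - pl x := by
  show LieSubmodule.Quotient.mk' NN (LieSubmodule.Quotient.mk' relIdeal (-x)) = _
  rw [map_neg, map_neg]; rfl

lemma mem11 : mkL (gen .e11) ∈ NIdeal :=
  LieSubmodule.subset_lieSpan (R := ℚ) (L := Lquot) (Or.inl rfl)
lemma mem22 : mkL (gen .e22) ∈ NIdeal :=
  LieSubmodule.subset_lieSpan (R := ℚ) (L := Lquot) (Or.inr (Or.inl rfl))
lemma mem12 : mkL (gen .e12) ∈ NIdeal :=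
  LieSubmodule.subset_lieSpan (R := ℚ) (L := Lquot) (Or.inr (Or.inr rfl))

lemma mk_lie_zero {x y : Lquot} (hx : x ∈ NIdeal) (hy : y ∈ NIdeal) :
    (LieSubmodule.Quotient.mk (N := NN) ⁅x, y⁆ : LPL) = 0 :=
  LieSubmodule.Quotient.mk_eq_zero'.mpr (LieSubmodule.lie_mem_lie hx hy)

lemma h_e1e2 : ⁅E1, E2⁆ = 0 := pl_rel_zero (Or.inl rfl)

lemma h_e11e2 : ⁅E11, E2⁆ = 0 := pl_rel_zero (Or.inr (Or.inl rfl))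

lemma h_e1e22 : ⁅E1, E22⁆ = 0 := pl_rel_zero (Or.inr (Or.inr (Or.inl rfl)))

lemma h_e2e12 : ⁅E2, E12⁆ = ⁅E1, E12⁆ := by
  have h0 : pl ((-⁅gen .e11, gen .e12⁆) - ⁅gen .e2 - gen .e1, gen .e12⁆) = 0 :=
    pl_rel_zero (Or.inr (Or.inr (Or.inr (Or.inr (Or.inl rfl)))))
  rw [pl_sub, pl_neg, pl_bracket, pl_bracket, pl_sub] at h0
  have h1 : (⁅E11, E12⁆ : LPL) = 0 := mk_lie_zero mem11 mem12
  rw [show pl (gen .e11) = E11 from rfl, show pl (gen .e12) = E12 from rfl,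
    show pl (gen .e2) = E2 from rfl, show pl (gen .e1) = E1 from rfl, h1, sub_lie] at h0
  simp only [neg_zero, zero_sub, neg_eq_zero, sub_eq_zero] at h0
  exact h0

lemma adPL_apply (z w : LPL) : adPL z w = ⁅z, w⁆ := rfl

lemma comm12 : Commute (adPL E1) (adPL E2) := by
  have h : adPL ⁅E1, E2⁆ = ⁅adPL E1, adPL E2⁆ := (LieAlgebra.ad ℚ LPL).map_lie E1 E2
  rw [h_e1e2, show adPL (0 : LPL) = 0 from (LieAlgebra.ad ℚ LPL).map_zero, Ring.lie_def] at h
  exact sub_eq_zero.mp h.symm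

lemma ad_pow_succ (z w : LPL) (n : ℕ) : ⁅z, (adPL z ^ n) w⁆ = (adPL z ^ (n + 1)) w := by
  rw [pow_succ', Module.End.mul_apply, adPL_apply]

lemma swap_ad (w : LPL) (n : ℕ) :
    ⁅E2, (adPL E1 ^ n) w⁆ = (adPL E1 ^ n) ⁅E2, w⁆ := by
  have h := ((comm12.symm).pow_right n).eq
  calc ⁅E2, (adPL E1 ^ n) w⁆ = (adPL E2 * adPL E1 ^ n) w := rfl
    _ = (adPL E1 ^ n * adPL E2) w := by rw [h]
    _ = (adPL E1 ^ n) ⁅E2, w⁆ := rfl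

lemma swap_ad' (w : LPL) (n : ℕ) :
    ⁅E1, (adPL E2 ^ n) w⁆ = (adPL E2 ^ n) ⁅E1, w⁆ := by
  have h := (comm12.pow_right n).eq
  calc ⁅E1, (adPL E2 ^ n) w⁆ = (adPL E1 * adPL E2 ^ n) w := rfl
    _ = (adPL E2 ^ n * adPL E1) w := by rw [h]
    _ = (adPL E2 ^ n) ⁅E1, w⁆ := rfl

/-- lift of powers to Lquot, plus N-membership. -/
lemma lift_pow (a x : FL) (hx : mkL x ∈ NIdeal) (n : ℕ) :
    (adPL (pl a) ^ n) (pl x)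
      = LieSubmodule.Quotient.mk (N := NN) ((LieAlgebra.ad ℚ Lquot (mkL a) ^ n) (mkL x)) ∧
    (LieAlgebra.ad ℚ Lquot (mkL a) ^ n) (mkL x) ∈ NIdeal := by
  induction n with
  | zero => exact ⟨rfl, hx⟩
  | succ n ih =>
    refine ⟨?_, ?_⟩
    · rw [pow_succ', Module.End.mul_apply, ih.1, pow_succ', Module.End.mul_apply]
      rfl
    · rw [pow_succ', Module.End.mul_apply, LieAlgebra.ad_apply]
      exact NIdeal.lie_mem ih.2

lemma range_lift {u : LPL}
    (hu : u ∈ (Set.range fun m : ℕ => (adPL E1 ^ m) E11) ∪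
        (Set.range fun m : ℕ => (adPL E2 ^ m) E22) ∪
        (Set.range fun m : ℕ => (adPL E1 ^ m) E12)) :
    ∃ x : Lquot, x ∈ NIdeal ∧ u = LieSubmodule.Quotient.mk (N := NN) x := by
  rcases hu with (⟨m, rfl⟩ | ⟨m, rfl⟩) | ⟨m, rfl⟩
  · exact ⟨_, (lift_pow (gen .e1) (gen .e11) mem11 m).2, (lift_pow _ _ mem11 m).1⟩
  · exact ⟨_, (lift_pow (gen .e2) (gen .e22) mem22 m).2, (lift_pow _ _ mem22 m).1⟩
  · exact ⟨_, (lift_pow (gen .e1) (gen .e12) mem12 m).2, (lift_pow _ _ mem12 m).1⟩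

end auxproofs

theorem stmt5 :
    ⁅E1, E2⁆ = 0 ∧
    (∀ n : ℕ, ⁅E1, (adPL E1 ^ n) E11⁆ = (adPL E1 ^ (n + 1)) E11) ∧
    (∀ n : ℕ, ⁅E2, (adPL E2 ^ n) E22⁆ = (adPL E2 ^ (n + 1)) E22) ∧
    (∀ n : ℕ, ⁅E1, (adPL E1 ^ n) E12⁆ = (adPL E1 ^ (n + 1)) E12) ∧
    (∀ n : ℕ, ⁅E2, (adPL E1 ^ n) E12⁆ = (adPL E1 ^ (n + 1)) E12) ∧
    (∀ n : ℕ, ⁅E2, (adPL E1 ^ n) E11⁆ = 0) ∧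
    (∀ n : ℕ, ⁅E1, (adPL E2 ^ n) E22⁆ = 0) ∧
    (∀ u ∈ (Set.range fun m : ℕ => (adPL E1 ^ m) E11) ∪
        (Set.range fun m : ℕ => (adPL E2 ^ m) E22) ∪
        (Set.range fun m : ℕ => (adPL E1 ^ m) E12),
     ∀ v ∈ (Set.range fun m : ℕ => (adPL E1 ^ m) E11) ∪
        (Set.range fun m : ℕ => (adPL E2 ^ m) E22) ∪
        (Set.range fun m : ℕ => (adPL E1 ^ m) E12),
      ⁅u, v⁆ = 0) := by
  refine ⟨h_e1e2, fun n => ad_pow_succ _ _ n, fun n => ad_pow_succ _ _ n,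
    fun n => ad_pow_succ _ _ n, ?_, ?_, ?_, ?_⟩
  · intro n
    rw [swap_ad, h_e2e12, ← adPL_apply, ← Module.End.mul_apply, ← pow_succ]
  · intro n
    rw [swap_ad]
    have : (⁅E2, E11⁆ : LPL) = 0 := by
      rw [← lie_skew, h_e11e2, neg_zero]
    rw [this, map_zero]
  · intro n
    rw [swap_ad', h_e1e22, map_zero]
  · intro u hu v hv
    obtain ⟨x, hx, rfl⟩ := range_lift hu
    obtain ⟨y, hy, rfl⟩ := range_lift hv
    exact mk_lie_zero hx hy
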